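/- Let Δ > 0, ε₁, ε₂ > 0, T ∈ ℝ, and let a, b be real sequences with |a_i − b_i| ≤ Δ for all i. Let P_a(k) (respectively P_b(k)) be the probability, under independent noise v₀ drawn from the Laplace distribution of scale Δ/ε₁ and v₁, …, v_k each drawn from the Laplace distribution of scale Δ/ε₂, of the event {a_i + v_i < T + v₀ for all 1 ≤ i ≤ k−1, and a_k + v_k ≥ T + v₀} (with b in place of a for P_b(k)). Then for every k ≥ 1, P_a(k) ≤ exp(ε₁ + 2ε₂)·P_b(k); and if moreover a, b are monotonic (a_i ≥ b_i for all i or a_i ≤ b_i for all i), then P_a(k) ≤ exp(ε₁ + ε₂)·P_b(k). (AboveThreshold with Laplace noise is (ε₁+2ε₂)-DP for general queries and (ε₁+ε₂)-DP for monotonic queries.) -/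

import Mathlib

open MeasureTheory Real
open scoped ENNReal

/-- The Laplace distribution with scale `b`: density `z ↦ (1/(2b))·exp(−|z|/b)` with
respect to Lebesgue measure. -/
noncomputable def laplace (b : ℝ) : Measure ℝ :=
  volume.withDensity fun z => ENNReal.ofReal ((1 / (2 * b)) * Real.exp (-(|z| / b)))


instance laplace_sigmaFinite (b : ℝ) : SigmaFinite (laplace b) := by
  unfold laplace; infer_instance

/-- 1-dim translation inequality for the Laplace measure. -/
lemma laplace_map_add_le (s : ℝ) (hs : 0 < s) (c : ℝ) :
    Measure.map (· + c) (laplace s) ≤ ENNReal.ofReal (Real.exp (|c| / s)) • laplace s := by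
  set f : ℝ → ℝ≥0∞ := fun z => ENNReal.ofReal ((1 / (2 * s)) * Real.exp (-(|z| / s))) with hf
  refine Measure.le_iff.mpr fun S hS => ?_
  have hpre : MeasurableSet ((· + c) ⁻¹' S) := hS.preimage (measurable_add_const c)
  rw [Measure.map_apply (measurable_add_const c) hS, Measure.smul_apply, smul_eq_mul]
  show laplace s ((· + c) ⁻¹' S) ≤ _
  rw [laplace, withDensity_apply _ hpre, withDensity_apply _ hS]
  have h1 : ∫⁻ x in (· + c) ⁻¹' S, f x ∂volume
      = ∫⁻ x, S.indicator (fun y => f (y - c)) (x + c) ∂volume := by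
    rw [← lintegral_indicator hpre _]
    congr 1; funext x
    by_cases hx : x + c ∈ S
    · rw [Set.indicator_of_mem hx, Set.indicator_of_mem (by exact hx : x ∈ (· + c) ⁻¹' S)]
      simp
    · rw [Set.indicator_of_notMem hx, Set.indicator_of_notMem (by exact hx)]
  rw [h1, lintegral_add_right_eq_self (fun y => S.indicator (fun y => f (y - c)) y) c,
    lintegral_indicator hS _]
  calc ∫⁻ y in S, f (y - c) ∂volume
      ≤ ∫⁻ y in S, ENNReal.ofReal (Real.exp (|c| / s)) * f y ∂volume := by
        refine lintegral_mono fun y => ?_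
        rw [hf]
        simp only []
        rw [← ENNReal.ofReal_mul (Real.exp_nonneg _)]
        refine ENNReal.ofReal_le_ofReal ?_
        have habs : |y| - |c| ≤ |y - c| := abs_sub_abs_le_abs_sub y c
        have h2 : Real.exp (|c| / s) * (1 / (2 * s) * Real.exp (-(|y| / s)))
            = 1 / (2 * s) * Real.exp ((|c| - |y|) / s) := by
          rw [mul_left_comm, ← Real.exp_add]; ring_nf
        rw [h2]
        have h2s : (0:ℝ) ≤ 1 / (2 * s) := by positivity
        gcongr
        rw [← neg_div]
        exact (div_le_div_iff_of_pos_right hs).mpr (by linarith)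
    _ = ENNReal.ofReal (Real.exp (|c| / s)) * ∫⁻ y in S, f y ∂volume :=
        lintegral_const_mul' _ _ ENNReal.ofReal_ne_top

lemma map_prodMap_le {α β : Type*} [MeasurableSpace α] [MeasurableSpace β]
    (μ : Measure α) (ν : Measure β) [SigmaFinite ν]
    {f : α → α} {g : β → β} (hf : Measurable f) (hg : Measurable g)
    {K₁ K₂ : ℝ≥0∞} (hK₂ : K₂ ≠ ⊤) (h₁ : Measure.map f μ ≤ K₁ • μ) (h₂ : Measure.map g ν ≤ K₂ • ν) :
    Measure.map (Prod.map f g) (μ.prod ν) ≤ (K₁ * K₂) • (μ.prod ν) := by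
  refine Measure.le_iff.mpr fun S hS => ?_
  have hfg : Measurable (Prod.map f g) := hf.prodMap hg
  have hpre : MeasurableSet (Prod.map f g ⁻¹' S) := hS.preimage hfg
  rw [Measure.map_apply hfg hS, Measure.smul_apply, smul_eq_mul,
    Measure.prod_apply hpre, Measure.prod_apply hS]
  calc ∫⁻ x, ν (Prod.mk x ⁻¹' (Prod.map f g ⁻¹' S)) ∂μ
      = ∫⁻ x, (Measure.map g ν) (Prod.mk (f x) ⁻¹' S) ∂μ := by
        refine lintegral_congr fun x => ?_
        rw [Measure.map_apply hg (measurable_prodMk_left hS)]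
        rfl
    _ ≤ ∫⁻ x, K₂ * ν (Prod.mk (f x) ⁻¹' S) ∂μ := by
        refine lintegral_mono fun x => ?_
        have := h₂ (Prod.mk (f x) ⁻¹' S)
        rwa [Measure.smul_apply, smul_eq_mul] at this
    _ = K₂ * ∫⁻ x, (fun x => ν (Prod.mk x ⁻¹' S)) (f x) ∂μ :=
        lintegral_const_mul' _ _ hK₂
    _ = K₂ * ∫⁻ x, (fun x => ν (Prod.mk x ⁻¹' S)) x ∂(Measure.map f μ) := by
        rw [lintegral_map (measurable_measure_prodMk_left hS) hf]
    _ ≤ K₂ * ∫⁻ x, (fun x => ν (Prod.mk x ⁻¹' S)) x ∂(K₁ • μ) :=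
        mul_le_mul_right (lintegral_mono' h₁ le_rfl) _
    _ = K₁ * K₂ * ∫⁻ x, ν (Prod.mk x ⁻¹' S) ∂μ := by
        rw [lintegral_smul_measure]; ring

lemma map_add_pi_le {n : ℕ} (ν : Fin n → Measure ℝ) [∀ i, SigmaFinite (ν i)]
    (c : Fin n → ℝ) (K : Fin n → ℝ≥0∞) (hK : ∀ i, K i ≠ ⊤)
    (h : ∀ i, Measure.map (· + c i) (ν i) ≤ K i • ν i) :
    Measure.map (· + c) (Measure.pi ν) ≤ (∏ i, K i) • Measure.pi ν := by
  induction n with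
  | zero =>
      have hid : (fun v : Fin 0 → ℝ => v + c) = id := by
        funext v; exact funext fun i => i.elim0
      rw [hid, Measure.map_id]
      simp
  | succ n ih =>
      set e := MeasurableEquiv.piFinSuccAbove (fun _ : Fin (n + 1) => ℝ) 0 with he
      have hMP := measurePreserving_piFinSuccAbove ν 0
      set c' : Fin n → ℝ := fun j => c (Fin.succAbove 0 j) with hc'
      set PM : ℝ × (Fin n → ℝ) → ℝ × (Fin n → ℝ) :=
        Prod.map (· + c 0) (· + c') with hPM
      have hcomm : (fun v : Fin (n + 1) → ℝ => v + c) = e.symm ∘ PM ∘ e := by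
        funext v
        have : PM (e v) = e (v + c) := by
          refine Prod.ext rfl ?_
          rfl
        simp [this]
      have hrest : Measure.map (· + c') (Measure.pi fun j => ν (Fin.succAbove 0 j)) ≤
          (∏ j, K (Fin.succAbove 0 j)) • Measure.pi fun j => ν (Fin.succAbove 0 j) :=
        ih (fun j => ν (Fin.succAbove 0 j)) c' (fun j => K (Fin.succAbove 0 j))
          (fun j => hK _) (fun j => h _)
      have hprod : Measure.map PM ((ν 0).prod (Measure.pi fun j => ν (Fin.succAbove 0 j))) ≤
          (K 0 * ∏ j, K (Fin.succAbove 0 j)) •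
            ((ν 0).prod (Measure.pi fun j => ν (Fin.succAbove 0 j))) :=
        map_prodMap_le _ _ (measurable_add_const _) (measurable_add_const _)
          (ENNReal.prod_ne_top fun j _ => hK _) (h 0) hrest
      calc Measure.map (· + c) (Measure.pi ν)
          = Measure.map e.symm (Measure.map PM (Measure.map e (Measure.pi ν))) := by
            have hPMm : Measurable PM := (measurable_add_const _).prodMap (measurable_add_const _)
            rw [hcomm, ← Function.comp_assoc, ← Measure.map_map (e.symm.measurable.comp hPMm) e.measurable,
              ← Measure.map_map e.symm.measurable hPMm]
        _ = Measure.map e.symm (Measure.map PM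
              ((ν 0).prod (Measure.pi fun j => ν (Fin.succAbove 0 j)))) := by
            rw [hMP.map_eq]
        _ ≤ Measure.map e.symm ((K 0 * ∏ j, K (Fin.succAbove 0 j)) •
              ((ν 0).prod (Measure.pi fun j => ν (Fin.succAbove 0 j)))) :=
            Measure.map_mono hprod e.symm.measurable
        _ = (∏ i, K i) • Measure.pi ν := by
            rw [Measure.map_smul, (hMP.symm e).map_eq, Fin.prod_univ_succAbove K 0]

/-- The event that `AboveThreshold` with threshold `T` and query values `a 1, a 2, …` halts
exactly at query `k`: coordinates `v 0, v 1, …, v k` are the noise on the threshold and on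
queries `1, …, k`. -/
def haltEvent (T : ℝ) (a : ℕ → ℝ) (k : ℕ) : Set (Fin (k + 1) → ℝ) :=
  {v | (∀ i : Fin (k + 1), 1 ≤ (i : ℕ) → (i : ℕ) < k → a i + v i < T + v 0) ∧
       T + v 0 ≤ a k + v (Fin.last k)}


lemma measurableSet_haltEvent (T : ℝ) (a : ℕ → ℝ) (k : ℕ) :
    MeasurableSet (haltEvent T a k) := by
  have h2 : MeasurableSet {v : Fin (k + 1) → ℝ | T + v 0 ≤ a k + v (Fin.last k)} :=
    measurableSet_le (measurable_const.add (measurable_pi_apply 0))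
      (measurable_const.add (measurable_pi_apply (Fin.last k)))
  have h1 : MeasurableSet {v : Fin (k + 1) → ℝ |
      ∀ i : Fin (k + 1), 1 ≤ (i : ℕ) → (i : ℕ) < k → a i + v i < T + v 0} := by
    rw [Set.setOf_forall]
    refine MeasurableSet.iInter fun i => ?_
    by_cases hi1 : 1 ≤ (i : ℕ)
    · by_cases hi2 : (i : ℕ) < k
      · simp only [eq_true hi1, eq_true hi2, true_implies]
        exact measurableSet_lt (measurable_const.add (measurable_pi_apply i))
          (measurable_const.add (measurable_pi_apply 0))
      · simp only [eq_false hi2, false_implies, implies_true, Set.setOf_true,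
          MeasurableSet.univ]
    · simp only [eq_false hi1, false_implies, Set.setOf_true, MeasurableSet.univ]
  exact h1.inter h2

lemma key_ineq (Δ ε₁ ε₂ T : ℝ) (hΔ : 0 < Δ) (hε₁ : 0 < ε₁) (hε₂ : 0 < ε₂)
    (a b : ℕ → ℝ) (k : ℕ) (hk : 1 ≤ k) (d₀ dk r : ℝ)
    (h1 : ∀ i : ℕ, b i ≤ a i + d₀) (h2 : a k ≤ b k + (dk - d₀))
    (hr : |d₀| / (Δ / ε₁) + |dk| / (Δ / ε₂) ≤ r) :
    Measure.pi (fun i : Fin (k + 1) => if i = 0 then laplace (Δ / ε₁) else laplace (Δ / ε₂))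
        (haltEvent T a k) ≤
      ENNReal.ofReal (Real.exp r) *
        Measure.pi (fun i : Fin (k + 1) => if i = 0 then laplace (Δ / ε₁) else laplace (Δ / ε₂))
          (haltEvent T b k) := by
  set ν : Fin (k + 1) → Measure ℝ :=
    fun i => if i = 0 then laplace (Δ / ε₁) else laplace (Δ / ε₂) with hνdef
  set sc : Fin (k + 1) → ℝ := fun i => if i = 0 then Δ / ε₁ else Δ / ε₂ with hscdef
  have hsc : ∀ i, 0 < sc i := fun i => by
    simp only [hscdef]; split <;> positivity
  have hν : ∀ i, ν i = laplace (sc i) := fun i => by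
    simp only [hνdef, hscdef]; split <;> rfl
  haveI : ∀ i, SigmaFinite (ν i) := fun i => by rw [hν i]; infer_instance
  have hlast0 : (Fin.last k : Fin (k + 1)) ≠ 0 := by
    intro h
    have := congrArg Fin.val h
    simp only [Fin.val_last, Fin.val_zero] at this
    omega
  set c : Fin (k + 1) → ℝ :=
    fun i => if i = 0 then d₀ else if i = Fin.last k then dk else 0 with hcdef
  set K : Fin (k + 1) → ℝ≥0∞ :=
    fun i => ENNReal.ofReal (Real.exp (|c i| / sc i)) with hKdef
  have hKtop : ∀ i, K i ≠ ⊤ := fun i => ENNReal.ofReal_ne_top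
  have hmaps : ∀ i, Measure.map (· + c i) (ν i) ≤ K i • ν i := fun i => by
    rw [hν i]; exact laplace_map_add_le _ (hsc i) _
  have hincl : haltEvent T a k ⊆ (· + c) ⁻¹' haltEvent T b k := by
    rintro v ⟨hv1, hv2⟩
    have hc0 : c 0 = d₀ := by simp [hcdef]
    constructor
    · intro i hi1 hi2
      have hi0 : i ≠ 0 := by
        rintro rfl; simp only [Fin.val_zero] at hi1; omega
      have hil : i ≠ Fin.last k := by
        rintro rfl; simp only [Fin.val_last] at hi2; omega
      have hci : c i = 0 := by simp [hcdef, hi0, hil]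
      show b ↑i + (v i + c i) < T + (v 0 + c 0)
      rw [hci, hc0]
      have ha := hv1 i hi1 hi2
      have hb := h1 ↑i
      linarith
    · have hcl : c (Fin.last k) = dk := by simp [hcdef, hlast0]
      show T + (v 0 + c 0) ≤ b k + (v (Fin.last k) + c (Fin.last k))
      rw [hc0, hcl]
      linarith
  have hmeasb := measurableSet_haltEvent T b k
  have hmapmeas : Measurable fun v : Fin (k + 1) → ℝ => v + c := measurable_add_const c
  calc Measure.pi ν (haltEvent T a k)
      ≤ Measure.pi ν ((· + c) ⁻¹' haltEvent T b k) := measure_mono hincl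
    _ = Measure.map (· + c) (Measure.pi ν) (haltEvent T b k) :=
        (Measure.map_apply hmapmeas hmeasb).symm
    _ ≤ ((∏ i, K i) • Measure.pi ν) (haltEvent T b k) :=
        Measure.le_iff'.mp (map_add_pi_le ν c K hKtop hmaps) _
    _ = (∏ i, K i) * Measure.pi ν (haltEvent T b k) := by
        rw [Measure.smul_apply, smul_eq_mul]
    _ ≤ ENNReal.ofReal (Real.exp r) * Measure.pi ν (haltEvent T b k) := by
        refine mul_le_mul_left ?_ _
        have hne : (0 : Fin (k + 1)) ≠ Fin.last k := fun h => hlast0 h.symm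
        have hprod : ∏ i, K i = K 0 * K (Fin.last k) := by
          rw [← Finset.prod_pair hne]
          refine (Finset.prod_subset (Finset.subset_univ _) ?_).symm
          intro i _ hi
          simp only [Finset.mem_insert, Finset.mem_singleton, not_or] at hi
          have hci : c i = 0 := by simp [hcdef, hi.1, hi.2]
          simp [hKdef, hci]
        have h0 : K 0 = ENNReal.ofReal (Real.exp (|d₀| / (Δ / ε₁))) := by
          simp [hKdef, hcdef, hscdef]
        have hl : K (Fin.last k) = ENNReal.ofReal (Real.exp (|dk| / (Δ / ε₂))) := by
          simp [hKdef, hcdef, hscdef, hlast0]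
        rw [hprod, h0, hl, ← ENNReal.ofReal_mul (Real.exp_nonneg _), ← Real.exp_add]
        exact ENNReal.ofReal_le_ofReal (Real.exp_le_exp.mpr hr)

/-- `AboveThreshold` with Laplace noise is `(ε₁+2ε₂)`-DP for general sensitivity-`Δ`
queries and `(ε₁+ε₂)`-DP for monotonic queries. -/
theorem laplace_aboveThreshold_dp (Δ ε₁ ε₂ T : ℝ) (hΔ : 0 < Δ) (hε₁ : 0 < ε₁)
    (hε₂ : 0 < ε₂) (a b : ℕ → ℝ) (hsens : ∀ i : ℕ, |a i - b i| ≤ Δ) :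
    (∀ k : ℕ, 1 ≤ k →
      Measure.pi (fun i : Fin (k + 1) => if i = 0 then laplace (Δ / ε₁) else laplace (Δ / ε₂))
          (haltEvent T a k) ≤
        ENNReal.ofReal (Real.exp (ε₁ + 2 * ε₂)) *
          Measure.pi
            (fun i : Fin (k + 1) => if i = 0 then laplace (Δ / ε₁) else laplace (Δ / ε₂))
            (haltEvent T b k)) ∧
    ((∀ i : ℕ, b i ≤ a i) ∨ (∀ i : ℕ, a i ≤ b i) →
      ∀ k : ℕ, 1 ≤ k →
        Measure.pi (fun i : Fin (k + 1) => if i = 0 then laplace (Δ / ε₁) else laplace (Δ / ε₂))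
            (haltEvent T a k) ≤
          ENNReal.ofReal (Real.exp (ε₁ + ε₂)) *
            Measure.pi
              (fun i : Fin (k + 1) => if i = 0 then laplace (Δ / ε₁) else laplace (Δ / ε₂))
              (haltEvent T b k)) := by
  have hd1 : Δ / (Δ / ε₁) = ε₁ := by field_simp
  have hd2 : Δ / (Δ / ε₂) = ε₂ := by field_simp
  have hd2' : 2 * Δ / (Δ / ε₂) = 2 * ε₂ := by field_simp
  constructor
  · intro k hk
    refine key_ineq Δ ε₁ ε₂ T hΔ hε₁ hε₂ a b k hk Δ (2 * Δ) (ε₁ + 2 * ε₂)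
      (fun i => by have := abs_le.mp (hsens i); linarith)
      (by have := abs_le.mp (hsens k); linarith) ?_
    rw [abs_of_pos hΔ, abs_of_pos (by linarith : (0:ℝ) < 2 * Δ), hd1, hd2']
  · rintro (hmono | hmono) k hk
    · refine key_ineq Δ ε₁ ε₂ T hΔ hε₁ hε₂ a b k hk 0 Δ (ε₁ + ε₂)
        (fun i => by have := hmono i; linarith)
        (by have := abs_le.mp (hsens k); linarith) ?_
      rw [abs_zero, abs_of_pos hΔ, hd2]
      simp only [zero_div]
      linarith
    · refine key_ineq Δ ε₁ ε₂ T hΔ hε₁ hε₂ a b k hk Δ Δ (ε₁ + ε₂)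
        (fun i => by have := abs_le.mp (hsens i); linarith)
        (by have := hmono k; linarith) ?_
      rw [abs_of_pos hΔ, hd1, hd2]
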